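/- If every maximal independent set of a connected graph G is robust, and G contains a vertex u on a cycle with two neighbors v1, v2 in the same biconnected component whose neighborhoods differ (N(v1) ≠ N(v2)), and u has no pendant neighbor, then G admits a non-robust maximal independent set — contradiction; hence in such a G all neighbors of u in the component containing the cycle have identical neighborhoods. -/

import Mathlib

open SimpleGraph

variable {V : Type*}

/-- `S` is an independent set in `G`: no two vertices of `S` are adjacent. -/
def Indep (G : SimpleGraph V) (S : Set V) : Prop :=
  ∀ u ∈ S, ∀ v ∈ S, ¬ G.Adj u v

/-- `M` is a maximal independent set of `G` (maximal for inclusion). -/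
def IsMIS (G : SimpleGraph V) (M : Set V) : Prop :=
  Indep G M ∧ ∀ S : Set V, Indep G S → M ⊆ S → S = M

/-- `M` is robust in `G`: it is a maximal independent set of every
connected spanning subgraph of `G`. -/
def RobustMIS (G : SimpleGraph V) (M : Set V) : Prop :=
  ∀ H : SimpleGraph V, H ≤ G → H.Connected → IsMIS H M

/-- A pendant vertex: a vertex with exactly one neighbor. -/
def Pendant (G : SimpleGraph V) (v : V) : Prop :=
  ∃! w, G.Adj v w

/-- `v` lies on a cycle of `G`. -/
def OnCycle (G : SimpleGraph V) (v : V) : Prop :=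
  ∃ p : G.Walk v v, p.IsCycle

/-- `v` has at least one pendant neighbor. -/
def HasPendantNeighbor (G : SimpleGraph V) (v : V) : Prop :=
  ∃ w, G.Adj v w ∧ Pendant G w

/-- A sputnik graph: every vertex on a cycle has a pendant neighbor. -/
def Sputnik (G : SimpleGraph V) : Prop :=
  ∀ v, OnCycle G v → HasPendantNeighbor G v

/-- `G` is a complete bipartite graph with parts `V1`, `V2`. -/
def IsCompleteBipartiteWith (G : SimpleGraph V) (V1 V2 : Set V) : Prop :=
  (∀ v, v ∈ V1 ↔ v ∉ V2) ∧
    (∀ u v, G.Adj u v ↔ ((u ∈ V1 ∧ v ∈ V2) ∨ (u ∈ V2 ∧ v ∈ V1)))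

/-- `G` is a complete bipartite graph. -/
def IsCompleteBipartite (G : SimpleGraph V) : Prop :=
  ∃ V1 V2 : Set V, IsCompleteBipartiteWith G V1 V2

/-- `G` is biconnected: at least three vertices, and removing any
single vertex leaves it connected. -/
def Biconnected (G : SimpleGraph V) : Prop :=
  3 ≤ Nat.card V ∧ ∀ w : V, (G.induce {v | v ≠ w}).Connected

/-!
Suppose `v₁ ~ w` but `v₂ ≁ w`, where `v₁, v₂` are neighbours of `u` joined by a path avoiding `u`.
Pick in every component of `G - u` adjacent to `u` one vertex at distance two from `u`, taking
`w` in the component of `v₁, v₂`; together with `v₂` these vertices are independent, so they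
extend to a maximal independent set `M`, and `u ∉ M`. Deleting the edges from `u` to `M` keeps
the graph connected, because each component of `G - u` is still attached to `u` through a
neighbour of `u` adjacent to a vertex of `M` (for instance `v₁`). In that spanning subgraph `u`
has no neighbour in `M`, so `M` is not maximal there: `M` is not robust.
-/

lemma Indep.mono {G : SimpleGraph V} {S T : Set V} (hT : Indep G T) (hST : S ⊆ T) : Indep G S :=
  fun a ha b hb => hT a (hST ha) b (hST hb)

lemma indep_insert_iff {G : SimpleGraph V} {x : V} {S : Set V} :
    Indep G (insert x S) ↔ Indep G S ∧ ∀ y ∈ S, ¬ G.Adj x y := by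
  refine ⟨fun h => ⟨h.mono (Set.subset_insert x S),
    fun y hy => h x (Set.mem_insert x S) y (Set.mem_insert_of_mem x hy)⟩, ?_⟩
  rintro ⟨hS, hx⟩ a ha b hb hab
  rcases ha with rfl | ha <;> rcases hb with rfl | hb
  · exact hab.ne rfl
  · exact hx b hb hab
  · exact hx a ha hab.symm
  · exact hS a ha b hb hab

lemma Indep.exists_isMIS_superset {G : SimpleGraph V} {S : Set V} (hS : Indep G S) :
    ∃ M, S ⊆ M ∧ IsMIS G M := by
  have hchain : ∀ c ⊆ {T | Indep G T ∧ S ⊆ T}, IsChain (· ⊆ ·) c → c.Nonempty →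
      ∃ ub ∈ {T | Indep G T ∧ S ⊆ T}, ∀ s ∈ c, s ⊆ ub := by
    intro c hc hchain ⟨T, hT⟩
    refine ⟨⋃₀ c, ⟨?_, (hc hT).2.trans (Set.subset_sUnion_of_mem hT)⟩,
      fun s hs => Set.subset_sUnion_of_mem hs⟩
    rintro a ⟨T₁, hT₁, ha⟩ b ⟨T₂, hT₂, hb⟩
    rcases hchain.total hT₁ hT₂ with h | h
    · exact (hc hT₂).1 a (h ha) b hb
    · exact (hc hT₁).1 a ha b (h hb)
  obtain ⟨M, hSM, hmax⟩ := zorn_subset_nonempty _ hchain S ⟨hS, subset_rfl⟩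
  exact ⟨M, hSM, hmax.prop.1, fun T hT hMT =>
    (hmax.le_of_ge ⟨hT, hSM.trans hMT⟩ hMT).antisymm hMT⟩

lemma IsMIS.exists_adj_of_notMem {G : SimpleGraph V} {M : Set V} (hM : IsMIS G M) {x : V}
    (hx : x ∉ M) : ∃ m ∈ M, G.Adj x m := by
  by_contra! h
  have hins : insert x M = M := hM.2 _ (indep_insert_iff.2 ⟨hM.1, h⟩) (Set.subset_insert x M)
  exact hx (hins ▸ Set.mem_insert x M)

section DeleteVertex

variable {G : SimpleGraph V} {u : V}

lemma deleteEdges_setOf_mem_eq_deleteIncidenceSet :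
    G.deleteEdges {e | u ∈ e} = G.deleteIncidenceSet u := by
  ext
  simp [deleteIncidenceSet_adj, eq_comm]

lemma connectedComponentMk_deleteIncidenceSet_eq_of_adj {a b : V} (hab : G.Adj a b)
    (ha : a ≠ u) (hb : b ≠ u) :
    (G.deleteIncidenceSet u).connectedComponentMk a =
      (G.deleteIncidenceSet u).connectedComponentMk b :=
  ConnectedComponent.eq.2 (deleteIncidenceSet_adj.2 ⟨hab, ha, hb⟩).reachable

lemma indep_of_injOn_connectedComponentMk {S : Set V} (hu : u ∉ S)
    (hS : S.InjOn (G.deleteIncidenceSet u).connectedComponentMk) : Indep G S :=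
  fun _ ha _ hb hab => hab.ne <| hS ha hb <|
    connectedComponentMk_deleteIncidenceSet_eq_of_adj hab (ne_of_mem_of_not_mem ha hu)
      (ne_of_mem_of_not_mem hb hu)

lemma SimpleGraph.Walk.exists_adj_reachable_deleteIncidenceSet {z : V} (q : G.Walk z u)
    (hz : z ≠ u) :
    ∃ y, G.Adj u y ∧ (G.deleteIncidenceSet u).Reachable z y := by
  induction q with
  | nil => exact absurd rfl hz
  | @cons a b c hab q ih =>
    by_cases hb : b = c
    · subst hb
      exact ⟨a, hab.symm, .refl a⟩
    · obtain ⟨y, hy, hby⟩ := ih hb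
      exact ⟨y, hy, (deleteIncidenceSet_adj.2 ⟨hab, hz, hb⟩).reachable.trans hby⟩

lemma connected_deleteEdges_of_forall_reachable_notMem (hconn : G.Connected) {M : Set V}
    (hM : ∀ a, G.Adj u a → ∃ b, G.Adj u b ∧ b ∉ M ∧ (G.deleteIncidenceSet u).Reachable a b) :
    (G.deleteEdges ((fun m => s(u, m)) '' M)).Connected := by
  set H := G.deleteEdges ((fun m => s(u, m)) '' M)
  have hle : G.deleteIncidenceSet u ≤ H := by
    intro a b hab
    obtain ⟨hab, ha, hb⟩ := deleteIncidenceSet_adj.1 hab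
    refine (deleteEdges_adj ..).2 ⟨hab, ?_⟩
    rintro ⟨m, -, hm⟩
    exact (Sym2.mem_iff.1 (hm ▸ Sym2.mem_mk_left u m)).elim ha.symm hb.symm
  refine (connected_iff_exists_forall_reachable _).2 ⟨u, fun z => ?_⟩
  rcases eq_or_ne z u with rfl | hz
  · exact .refl z
  obtain ⟨y, hy, hzy⟩ := (hconn z u).some.exists_adj_reachable_deleteIncidenceSet hz
  obtain ⟨b, hb, hbM, hyb⟩ := hM y hy
  have hub : H.Adj u b := by
    refine (deleteEdges_adj ..).2 ⟨hb, ?_⟩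
    rintro ⟨m, hm, hmb⟩
    exact hbM (Sym2.congr_right.1 hmb ▸ hm)
  exact hub.reachable.trans ((hzy.trans hyb).mono hle).symm

lemma exists_adj_ne_of_not_hasPendantNeighbor (hpend : ¬ HasPendantNeighbor G u) {a : V}
    (ha : G.Adj u a) : ∃ b, G.Adj a b ∧ b ≠ u := by
  by_contra! h
  exact hpend ⟨a, ha, u, ha.symm, h⟩

lemma not_robustMIS_of_forall_reachable_notMem (hconn : G.Connected) {M : Set V}
    (huM : u ∉ M)
    (hreach : ∀ a, G.Adj u a → ∃ b, G.Adj u b ∧ b ∉ M ∧ (G.deleteIncidenceSet u).Reachable a b) :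
    ¬ RobustMIS G M := by
  intro hrob
  obtain ⟨m, hm, hum⟩ := (hrob _ (deleteEdges_le _)
    (connected_deleteEdges_of_forall_reachable_notMem hconn hreach)).exists_adj_of_notMem huM
  exact ((deleteEdges_adj ..).1 hum).2 ⟨m, hm, rfl⟩

lemma exists_isMIS_forall_reachable_notMem (hpend : ¬ HasPendantNeighbor G u) {v₁ v₂ w : V}
    (h₁ : G.Adj u v₁) (h₂ : G.Adj u v₂) (h₁₂ : (G.deleteIncidenceSet u).Reachable v₁ v₂)
    (hw₁ : G.Adj v₁ w) (hw₂ : ¬ G.Adj v₂ w) :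
    ∃ M, IsMIS G M ∧ u ∉ M ∧
      ∀ a, G.Adj u a → ∃ b, G.Adj u b ∧ b ∉ M ∧ (G.deleteIncidenceSet u).Reachable a b := by
  set mk := (G.deleteIncidenceSet u).connectedComponentMk
  set P := {c | ∃ y, G.Adj u y ∧ mk y = c}
  have hwitness : ∀ c, ∃ a b, c ∈ P →
      G.Adj u a ∧ G.Adj a b ∧ b ≠ u ∧ mk a = c ∧ (c = mk v₁ → b = w) := by
    intro c
    by_cases hc₁ : c = mk v₁
    · exact ⟨v₁, w, fun _ => ⟨h₁, hw₁, fun h => hw₂ (h ▸ h₂.symm), hc₁.symm, fun _ => rfl⟩⟩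
    by_cases hc : c ∈ P
    · obtain ⟨y, hy, rfl⟩ := hc
      obtain ⟨b, hyb, hbu⟩ := exists_adj_ne_of_not_hasPendantNeighbor hpend hy
      exact ⟨y, b, fun _ => ⟨hy, hyb, hbu, rfl, fun h => absurd h hc₁⟩⟩
    · exact ⟨u, u, fun h => absurd h hc⟩
  choose a b hab using hwitness
  have hmkb : ∀ c ∈ P, mk (b c) = c := fun c hc => by
    obtain ⟨hua, hadj, hbu, hac, -⟩ := hab c hc
    exact (connectedComponentMk_deleteIncidenceSet_eq_of_adj hadj hua.ne' hbu).symm.trans hac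
  have hB : Indep G (b '' P) := by
    refine indep_of_injOn_connectedComponentMk (fun ⟨c, hc, hcu⟩ => (hab c hc).2.2.1 hcu) ?_
    rintro _ ⟨c, hc, rfl⟩ _ ⟨c', hc', rfl⟩ h
    exact congrArg b ((hmkb c hc).symm.trans (h.trans (hmkb c' hc')))
  have hS : Indep G (insert v₂ (b '' P)) := by
    refine indep_insert_iff.2 ⟨hB, ?_⟩
    rintro _ ⟨c, hc, rfl⟩ hv
    have hc₁ : c = mk v₁ := (hmkb c hc).symm.trans <|
      (connectedComponentMk_deleteIncidenceSet_eq_of_adj hv h₂.ne' (hab c hc).2.2.1).symm.trans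
        (ConnectedComponent.eq.2 h₁₂.symm)
    exact hw₂ ((hab c hc).2.2.2.2 hc₁ ▸ hv)
  obtain ⟨M, hSM, hM⟩ := hS.exists_isMIS_superset
  refine ⟨M, hM, fun huM => hM.1 _ huM _ (hSM (Set.mem_insert _ _)) h₂, fun y hy => ?_⟩
  have hc : mk y ∈ P := ⟨y, hy, rfl⟩
  obtain ⟨hua, hadj, -, hac, -⟩ := hab _ hc
  exact ⟨a (mk y), hua, fun haM => hM.1 _ haM _ (hSM (.inr ⟨_, hc, rfl⟩)) hadj,
    ConnectedComponent.eq.1 hac.symm⟩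

lemma neighborSet_subset_of_reachable_deleteIncidenceSet (hconn : G.Connected)
    (hrob : ∀ M : Set V, IsMIS G M → RobustMIS G M) (hpend : ¬ HasPendantNeighbor G u)
    {v₁ v₂ : V} (h₁ : G.Adj u v₁) (h₂ : G.Adj u v₂)
    (h₁₂ : (G.deleteIncidenceSet u).Reachable v₁ v₂) :
    G.neighborSet v₁ ⊆ G.neighborSet v₂ := by
  intro w hw₁
  by_contra hw₂
  obtain ⟨M, hM, huM, hreach⟩ := exists_isMIS_forall_reachable_notMem hpend h₁ h₂ h₁₂ hw₁ hw₂
  exact not_robustMIS_of_forall_reachable_notMem hconn huM hreach (hrob M hM)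

end DeleteVertex

theorem stmt_19_general (G : SimpleGraph V) (hconn : G.Connected)
    (hrob : ∀ M : Set V, IsMIS G M → RobustMIS G M)
    (u : V) (p : G.Walk u u)
    (hpend : ¬ HasPendantNeighbor G u)
    (v1 v2 : V) (h1 : G.Adj u v1) (h2 : G.Adj u v2)
    (hcomp : ∃ x, x ∈ p.support ∧ x ≠ u ∧
      (G.deleteEdges {e : Sym2 V | u ∈ e}).Reachable v1 x ∧
      (G.deleteEdges {e : Sym2 V | u ∈ e}).Reachable v2 x) :
    G.neighborSet v1 = G.neighborSet v2 := by
  obtain ⟨x, -, -, hx₁, hx₂⟩ := hcomp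
  rw [deleteEdges_setOf_mem_eq_deleteIncidenceSet] at hx₁ hx₂
  exact (neighborSet_subset_of_reachable_deleteIncidenceSet hconn hrob hpend h1 h2
    (hx₁.trans hx₂.symm)).antisymm
    (neighborSet_subset_of_reachable_deleteIncidenceSet hconn hrob hpend h2 h1
      (hx₂.trans hx₁.symm))

theorem stmt_19 (G : SimpleGraph V) (hconn : G.Connected)
    (hrob : ∀ M : Set V, IsMIS G M → RobustMIS G M)
    (u : V) (p : G.Walk u u) (hp : p.IsCycle)
    (hpend : ¬ HasPendantNeighbor G u)
    (v1 v2 : V) (h1 : G.Adj u v1) (h2 : G.Adj u v2)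
    (hcomp : ∃ x, x ∈ p.support ∧ x ≠ u ∧
      (G.deleteEdges {e : Sym2 V | u ∈ e}).Reachable v1 x ∧
      (G.deleteEdges {e : Sym2 V | u ∈ e}).Reachable v2 x) :
    G.neighborSet v1 = G.neighborSet v2 :=
  stmt_19_general G hconn hrob u p hpend v1 v2 h1 h2 hcomp
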